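/- arXiv:1101.5715 — 5 statements merged into one kernel-verified Lean document; each statement's English description precedes it below -/
import Mathlib

section
/- Let Y be a real random variable whose law is symmetric (invariant under y ↦ −y) and satisfies E|Y| < ∞, and let f : ℝ → ℝ be continuously differentiable with bounded derivative. Then for every x ∈ ℝ, E[f(x+Y)] − f(x) = ∫_0^∞ ((f'(x+z) − f'(x−z))/2) · P(|Y| ≥ z) dz, the integral on the right being absolutely convergent. -/
/-!
With `φ t = (f (x + t) + f (x - t)) / 2`, symmetry of the law gives
`E f(x + Y) - f x = E [φ |Y| - φ 0] = E ∫₀^{|Y|} φ'`. The integrand `φ' t · 1{t ≤ |Y|}` is bounded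
by `sup |f'| · 1{t ≤ |Y|}`, whose integral is `sup |f'| · E|Y| < ∞` (layer cake), so Fubini
exchanges the two integrals and the indicator integrates to `P(|Y| ≥ t)`.
-/

open MeasureTheory Real Filter Set Function

section LayerCake

variable {α : Type*} [MeasurableSpace α] {μ : Measure α} {X : α → ℝ}

theorem measurable_measure_setOf_le : Measurable fun t => μ {a | t ≤ X a} :=
  Antitone.measurable fun _ _ hst => measure_mono fun _ ha => hst.trans ha

theorem lintegral_Ioi_measure_le_lt_top (hX0 : ∀ a, 0 ≤ X a) (hX : Integrable X μ) :
    ∫⁻ t in Ioi 0, μ {a | t ≤ X a} < ⊤ := by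
  rw [← lintegral_eq_lintegral_meas_le μ (ae_of_all _ hX0) hX.aemeasurable]
  exact hX.lintegral_lt_top

theorem integrableOn_Ioi_measureReal_le (hX0 : ∀ a, 0 ≤ X a) (hX : Integrable X μ) :
    IntegrableOn (fun t => μ.real {a | t ≤ X a}) (Ioi 0) := by
  refine ⟨(ENNReal.measurable_toReal.comp measurable_measure_setOf_le).aestronglyMeasurable, ?_⟩
  rw [hasFiniteIntegral_iff_ofReal (ae_of_all _ fun _ => measureReal_nonneg)]
  calc ∫⁻ t in Ioi 0, ENNReal.ofReal (μ.real {a | t ≤ X a})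
      ≤ ∫⁻ t in Ioi 0, μ {a | t ≤ X a} := lintegral_mono fun _ => ENNReal.ofReal_toReal_le
    _ < ⊤ := lintegral_Ioi_measure_le_lt_top hX0 hX

theorem integral_intervalIntegral_eq_integral_mul_measureReal_le [SFinite μ]
    (hX0 : ∀ a, 0 ≤ X a) (hXm : Measurable X) (hX : Integrable X μ) {g : ℝ → ℝ} {C : ℝ}
    (hg : Measurable g) (hgC : ∀ t, ‖g t‖ ≤ C) :
    ∫ a, (∫ t in 0..X a, g t) ∂μ = ∫ t in Ioi 0, g t * μ.real {a | t ≤ X a} := by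
  set k : ℝ → α → ℝ := fun t a => if t ≤ X a then g t else 0
  have hk_t (a : α) : ∫ t in Ioi 0, k t a = ∫ t in 0..X a, g t := by
    have : (fun t => k t a) = (Iic (X a)).indicator g := by
      funext t; simp [k, indicator_apply]
    rw [this, integral_indicator measurableSet_Iic, Measure.restrict_restrict measurableSet_Iic,
      Iic_inter_Ioi, ← intervalIntegral.integral_of_le (hX0 a)]
  have hk_a (t : ℝ) : (fun a => k t a) = {a | t ≤ X a}.indicator fun _ => g t := by
    funext a; simp [k, indicator_apply]
  have hset (t : ℝ) : MeasurableSet {a | t ≤ X a} := measurableSet_le measurable_const hXm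
  have hk_int : Integrable (uncurry k) ((volume.restrict (Ioi 0)).prod μ) := by
    have hmeas : Measurable (uncurry k) :=
      Measurable.ite (measurableSet_le measurable_fst (hXm.comp measurable_snd))
        (hg.comp measurable_fst) measurable_const
    refine (integrable_prod_iff hmeas.aestronglyMeasurable).2 ⟨?_, ?_⟩
    · have hfin := ae_lt_top' measurable_measure_setOf_le.aemeasurable
        (lintegral_Ioi_measure_le_lt_top hX0 hX).ne
      filter_upwards [hfin] with t ht
      rw [uncurry_def, hk_a t]
      exact (integrable_indicator_iff (hset t)).2 (integrableOn_const ht.ne)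
    · have hnorm (t : ℝ) : ∫ a, ‖uncurry k (t, a)‖ ∂μ = ‖g t‖ * μ.real {a | t ≤ X a} := by
        rw [uncurry_def]
        simp only [hk_a t, norm_indicator_eq_indicator_norm]
        rw [integral_indicator_const _ (hset t), smul_eq_mul, mul_comm]
      simp_rw [hnorm]
      exact (integrableOn_Ioi_measureReal_le hX0 hX).bdd_mul hg.norm.aestronglyMeasurable
        (ae_of_all _ fun t => by simpa using hgC t)
  calc ∫ a, (∫ t in 0..X a, g t) ∂μ = ∫ a, (∫ t in Ioi 0, k t a) ∂μ := by simp only [hk_t]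
    _ = ∫ t in Ioi 0, ∫ a, k t a ∂μ := (integral_integral_swap hk_int).symm
    _ = ∫ t in Ioi 0, g t * μ.real {a | t ≤ X a} := by
      congr 1 with t
      rw [hk_a t, integral_indicator_const _ (hset t), smul_eq_mul, mul_comm]

end LayerCake

theorem integral_eq_integral_half_add_comp_neg {G : Type*} [MeasurableSpace G] [AddGroup G]
    [MeasurableNeg G] {μ : Measure G} [μ.IsNegInvariant] {h : G → ℝ} (hh : Integrable h μ) :
    ∫ y, h y ∂μ = ∫ y, (h y + h (-y)) / 2 ∂μ := by
  rw [integral_div, integral_add hh hh.comp_neg, integral_neg_eq_self]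
  ring

theorem LipschitzWith.integrable_comp_const_add {f : ℝ → ℝ} {K : NNReal} (hf : LipschitzWith K f)
    {ν : Measure ℝ} [IsFiniteMeasure ν] (hν : Integrable (fun y => |y|) ν) (x : ℝ) :
    Integrable (fun y => f (x + y)) ν := by
  refine Integrable.mono' ((hν.const_mul K).add (integrable_const |f x|))
    (hf.continuous.comp (continuous_const_add x)).aestronglyMeasurable (ae_of_all _ fun y => ?_)
  have hdist := hf.dist_le_mul (x + y) x
  rw [dist_eq, dist_eq, add_sub_cancel_left] at hdist
  rw [norm_eq_abs, Pi.add_apply]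
  linarith [abs_sub_abs_le_abs_sub (f (x + y)) (f x)]

theorem half_add_sub_self_eq_intervalIntegral_deriv {f : ℝ → ℝ} (hf : ContDiff ℝ 1 f) (x y : ℝ) :
    (f (x + y) + f (x - y)) / 2 - f x =
      ∫ t in 0..|y|, (deriv f (x + t) - deriv f (x - t)) / 2 := by
  have hdiff := hf.differentiable one_ne_zero
  have hderiv (t : ℝ) : HasDerivAt (fun t => (f (x + t) + f (x - t)) / 2)
      ((deriv f (x + t) - deriv f (x - t)) / 2) t := by
    simpa [sub_eq_add_neg] using
      (((hdiff _).hasDerivAt.comp_const_add x t).add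
        ((hdiff _).hasDerivAt.comp_const_sub x t)).div_const 2
  have hcont : Continuous fun t => (deriv f (x + t) - deriv f (x - t)) / 2 := by
    have := hf.continuous_deriv le_rfl
    fun_prop
  rw [intervalIntegral.integral_eq_sub_of_hasDerivAt (fun t _ => hderiv t)
    (hcont.intervalIntegrable _ _)]
  rcases abs_cases y with ⟨hy, -⟩ | ⟨hy, -⟩ <;> rw [hy] <;> ring_nf

theorem stmt2
    (ν : Measure ℝ) [IsProbabilityMeasure ν]
    (hsym : ν.map (fun y : ℝ => -y) = ν)
    (hmom : Integrable (fun y : ℝ => |y|) ν)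
    (f : ℝ → ℝ) (hf : ContDiff ℝ 1 f) (hfb' : ∃ C, ∀ x, |deriv f x| ≤ C)
    (x : ℝ) :
    IntegrableOn
      (fun z => (deriv f (x + z) - deriv f (x - z)) / 2 * (ν {y | z ≤ |y|}).toReal)
      (Set.Ioi (0 : ℝ)) ∧
    (∫ y, f (x + y) ∂ν) - f x =
      ∫ z in Set.Ioi (0 : ℝ),
        (deriv f (x + z) - deriv f (x - z)) / 2 * (ν {y | z ≤ |y|}).toReal := by
  obtain ⟨C, hC⟩ := hfb'
  set g : ℝ → ℝ := fun z => (deriv f (x + z) - deriv f (x - z)) / 2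
  have hg : Continuous g := by
    have := hf.continuous_deriv le_rfl
    fun_prop
  have hgC (z : ℝ) : ‖g z‖ ≤ C := by
    rw [norm_eq_abs, abs_div, abs_two]
    linarith [abs_sub (deriv f (x + z)) (deriv f (x - z)), hC (x + z), hC (x - z)]
  refine ⟨(integrableOn_Ioi_measureReal_le (fun _ => abs_nonneg _) hmom).bdd_mul
    hg.aestronglyMeasurable (ae_of_all _ hgC), ?_⟩
  have : ν.IsNegInvariant := ⟨hsym⟩
  have hlip : LipschitzWith C.toNNReal f :=
    lipschitzWith_of_nnnorm_deriv_le (hf.differentiable one_ne_zero) fun t => by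
      rw [← NNReal.coe_le_coe, coe_nnnorm, norm_eq_abs]
      exact (hC t).trans (le_coe_toNNReal C)
  have hint := hlip.integrable_comp_const_add hmom x
  calc (∫ y, f (x + y) ∂ν) - f x = ∫ y, (f (x + y) - f x) ∂ν := by
        simp [integral_sub hint (integrable_const _)]
    _ = ∫ y, ((f (x + y) - f x) + (f (x + -y) - f x)) / 2 ∂ν :=
        integral_eq_integral_half_add_comp_neg (hint.sub (integrable_const _))
    _ = ∫ y, (∫ t in 0..|y|, g t) ∂ν := by
        congr 1 with y
        rw [← half_add_sub_self_eq_intervalIntegral_deriv hf]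
        ring_nf
    _ = _ := integral_intervalIntegral_eq_integral_mul_measureReal_le (fun _ => abs_nonneg _)
        measurable_abs hmom hg.measurable hgC
end

section
/- Let α ∈ (0,2). Then sup_{n ≥ 1, x ∈ ℝ} |D^α f_n(x)| ≤ (sup_{u ∈ [0,1]} |ψ''(u)|)/(2−α) + 2/α; in particular this supremum is finite. -/
open MeasureTheory Real Filter

/-- The fractional Laplacian of order `α`. -/
noncomputable def Dalpha (α : ℝ) (f : ℝ → ℝ) (x : ℝ) : ℝ :=
  ∫ h : ℝ, (f (x + h) - f x - (if |h| ≤ 1 then deriv f x * h else 0)) / |h| ^ (1 + α)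

/-- The smoothing polynomial `ψ(u) = 6u⁵ − 15u⁴ + 10u³`. -/
noncomputable def psi (u : ℝ) : ℝ := 6 * u ^ 5 - 15 * u ^ 4 + 10 * u ^ 3

/-- The cut-off functions `f_n(x) = ψ(min(max(|x| − (n−1), 0), 1))` for `n ≥ 1`, and
`f_0 ≡ 1`. -/
noncomputable def fn : ℕ → ℝ → ℝ
  | 0, _ => 1
  | n + 1, x => psi (min (max (|x| - (n : ℝ)) 0) 1)

/-! The profile `F = ψ ∘ clamp` is `C¹` because `ψ'` vanishes at `0` and `1`, and its derivative
`ψ' ∘ clamp` is Lipschitz with constant `K = sup_{[0,1]} |ψ''|`. As `F` vanishes on `(-∞, 0]`,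
`f_{m+1}(x) = F(x - m) + F(-x - m)`, whose derivative is again `K`-Lipschitz since the two
summands have disjoint supports. A `K`-Lipschitz derivative gives the Taylor bound
`|f(x+h) - f(x) - f'(x) h| ≤ K h² / 2`, used for `|h| ≤ 1`, while `0 ≤ f_n ≤ 1` bounds the
increment by `1` for `|h| > 1`; integrating against `|h|^(-1-α)` gives `K/(2-α) + 2/α`. -/

open Set NNReal

theorem hasDerivWithinAt_of_eqOn_isClosed {f g f' : ℝ → ℝ} {s : Set ℝ} (hs : IsClosed s)
    (hfg : EqOn f g s) (hg : ∀ t ∈ s, HasDerivWithinAt g (f' t) s t) (t : ℝ) :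
    HasDerivWithinAt f (f' t) s t := by
  by_cases ht : t ∈ s
  · exact (hg t ht).congr hfg (hfg ht)
  · exact HasFDerivWithinAt.of_notMem_closure (hs.closure_eq.symm ▸ ht)

theorem LipschitzWith.of_lipschitzOnWith_Iic_Ici {E : Type*} [PseudoMetricSpace E] {f : ℝ → E}
    {K : ℝ≥0} {c : ℝ} (h₁ : LipschitzOnWith K f (Iic c)) (h₂ : LipschitzOnWith K f (Ici c)) :
    LipschitzWith K f := by
  have key : ∀ a b, a ≤ b → dist (f a) (f b) ≤ K * dist a b := by
    intro a b hab
    rcases le_total b c with hb | hb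
    · exact h₁.dist_le_mul a (hab.trans hb : a ≤ c) b hb
    rcases le_total c a with ha | ha
    · exact h₂.dist_le_mul a ha b hb
    have hsplit : dist a c + dist c b = dist a b := by
      simp only [Real.dist_eq, abs_of_nonpos (sub_nonpos.2 ha), abs_of_nonpos (sub_nonpos.2 hb),
        abs_of_nonpos (sub_nonpos.2 hab)]
      ring
    calc dist (f a) (f b) ≤ dist (f a) (f c) + dist (f c) (f b) := dist_triangle _ _ _
      _ ≤ K * dist a c + K * dist c b :=
          add_le_add (h₁.dist_le_mul a ha c self_mem_Iic) (h₂.dist_le_mul c self_mem_Ici b hb)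
      _ = K * dist a b := by rw [← mul_add, hsplit]
  refine LipschitzWith.of_dist_le_mul fun a b => ?_
  rcases le_total a b with hab | hab
  · exact key a b hab
  · rw [dist_comm, dist_comm a]
    exact key b a hab

section Taylor
variable {f f' : ℝ → ℝ} {K : ℝ≥0}

theorem abs_sub_sub_mul_le_of_lipschitzWith_of_nonneg (hf : ∀ x, HasDerivAt f (f' x) x)
    (hf' : LipschitzWith K f') (x : ℝ) {h : ℝ} (hh : 0 ≤ h) :
    |f (x + h) - f x - f' x * h| ≤ K / 2 * h ^ 2 := by
  have hw : ∀ t : ℝ,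
      HasDerivAt (fun t => f (x + t) - f x - f' x * t) (f' (x + t) - f' x) t := by
    intro t
    exact ((((hf (x + t)).comp_const_add x t).sub_const (f x)).sub
      ((hasDerivAt_id' t).const_mul (f' x))).congr_deriv (by ring)
  have hB : ∀ t : ℝ, HasDerivAt (fun t => (K : ℝ) / 2 * t ^ 2) (K * t) t := by
    intro t
    exact ((hasDerivAt_pow 2 t).const_mul ((K : ℝ) / 2)).congr_deriv (by norm_num; ring)
  refine image_norm_le_of_norm_deriv_right_le_deriv_boundary
    (fun t _ => (hw t).continuousAt.continuousWithinAt) (fun t _ => (hw t).hasDerivWithinAt)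
    (by simp) hB (fun t ht => ?_) ⟨hh, le_rfl⟩
  simpa [Real.dist_eq, abs_of_nonneg ht.1] using hf'.dist_le_mul (x + t) x

theorem abs_sub_sub_mul_le_of_lipschitzWith (hf : ∀ x, HasDerivAt f (f' x) x)
    (hf' : LipschitzWith K f') (x h : ℝ) :
    |f (x + h) - f x - f' x * h| ≤ K / 2 * h ^ 2 := by
  rcases le_total 0 h with hh | hh
  · exact abs_sub_sub_mul_le_of_lipschitzWith_of_nonneg hf hf' x hh
  have hg : ∀ y, HasDerivAt (fun y => f (-y)) (-f' (-y)) y := fun y => by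
    simpa [Function.comp_def] using (hf (-y)).comp y (hasDerivAt_neg y)
  have hg' : LipschitzWith K fun y => -f' (-y) := LipschitzWith.of_dist_le_mul fun a b => by
    simpa only [dist_neg_neg] using hf'.dist_le_mul (-a) (-b)
  have := abs_sub_sub_mul_le_of_lipschitzWith_of_nonneg hg hg' (-x) (neg_nonneg.mpr hh)
  simp only [neg_neg, neg_add_rev, neg_mul_neg, even_two, Even.neg_pow] at this
  rwa [add_comm] at this

end Taylor

def cutoffProfile (ψ : ℝ → ℝ) (t : ℝ) : ℝ := ψ (min (max t 0) 1)

namespace cutoffProfile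
variable {ψ ψ' : ℝ → ℝ} {t : ℝ}

theorem of_nonpos (ht : t ≤ 0) : cutoffProfile ψ t = ψ 0 := by
  simp [cutoffProfile, ht]

theorem of_mem_Icc (ht : t ∈ Icc (0 : ℝ) 1) : cutoffProfile ψ t = ψ t := by
  simp [cutoffProfile, ht.1, ht.2]

theorem of_one_le (ht : 1 ≤ t) : cutoffProfile ψ t = ψ 1 := by
  simp [cutoffProfile, zero_le_one.trans ht, ht]

theorem hasDerivAt (hψ : ∀ u ∈ Icc (0 : ℝ) 1, HasDerivWithinAt ψ (ψ' u) (Icc 0 1) u)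
    (h₀ : ψ' 0 = 0) (h₁ : ψ' 1 = 0) (t : ℝ) :
    HasDerivAt (cutoffProfile ψ) (cutoffProfile ψ' t) t := by
  have hleft := hasDerivWithinAt_of_eqOn_isClosed isClosed_Iic (g := fun _ => ψ 0) (f' := cutoffProfile ψ')
    (fun u hu => of_nonpos hu) (fun u hu => by
      rw [of_nonpos hu, h₀]; exact hasDerivWithinAt_const _ _ _) t
  have hmid := hasDerivWithinAt_of_eqOn_isClosed isClosed_Icc (g := ψ) (f' := cutoffProfile ψ')
    (fun u hu => of_mem_Icc hu)
    (fun u hu => by rw [of_mem_Icc hu]; exact hψ u hu) t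
  have hright := hasDerivWithinAt_of_eqOn_isClosed isClosed_Ici (g := fun _ => ψ 1) (f' := cutoffProfile ψ')
    (fun u hu => of_one_le hu) (fun u hu => by
      rw [of_one_le hu, h₁]; exact hasDerivWithinAt_const _ _ _) t
  have := (hleft.union hmid).union hright
  rwa [Iic_union_Icc_eq_Iic zero_le_one, Iic_union_Ici, hasDerivWithinAt_univ] at this

theorem _root_.LipschitzOnWith.lipschitzWith_cutoffProfile {K : ℝ≥0}
    (h : LipschitzOnWith K ψ (Icc 0 1)) : LipschitzWith K (cutoffProfile ψ) := by
  have hclamp : LipschitzWith 1 fun t : ℝ => min (max t 0) 1 :=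
    (LipschitzWith.id.max_const 0).min_const 1
  have := h.comp hclamp.lipschitzOnWith (t := Icc 0 1) (s := univ)
    (fun t _ => ⟨le_min (le_max_right _ _) zero_le_one, min_le_right _ _⟩)
  rw [mul_one, lipschitzOnWith_univ] at this
  exact this

end cutoffProfile

section Radial
variable {F φ : ℝ → ℝ} {c : ℝ}

-- Splitting `F (|x| - c)` into two smooth summands removes the kink of `|·|` at `0`.
theorem comp_abs_sub_eq_add (hF : EqOn F 0 (Iic 0)) (hc : 0 ≤ c) (x : ℝ) :
    F (|x| - c) = F (x - c) + F (-x - c) := by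
  rcases le_total 0 x with hx | hx
  · rw [abs_of_nonneg hx, hF (show -x - c ≤ 0 by linarith), Pi.zero_apply, add_zero]
  · rw [abs_of_nonpos hx, hF (show x - c ≤ 0 by linarith), Pi.zero_apply, zero_add]

theorem hasDerivAt_comp_abs_sub (hF : ∀ t, HasDerivAt F (φ t) t) (hF₀ : EqOn F 0 (Iic 0))
    (hc : 0 ≤ c) (x : ℝ) :
    HasDerivAt (fun x => F (|x| - c)) (φ (x - c) - φ (-x - c)) x := by
  simp_rw [comp_abs_sub_eq_add hF₀ hc, sub_eq_add_neg (φ _)]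
  refine ((hF (x - c)).comp_sub_const x c).add ?_
  have h := (hF (-c - x)).comp_const_sub (-c) x
  simp only [neg_sub_comm c] at h
  exact h

theorem lipschitzWith_sub_comp_neg (hφ : LipschitzWith K φ) (hφ₀ : EqOn φ 0 (Iic 0))
    (hc : 0 ≤ c) : LipschitzWith K fun x => φ (x - c) - φ (-x - c) := by
  refine LipschitzWith.of_lipschitzOnWith_Iic_Ici (c := 0) ?_ ?_
  · refine LipschitzOnWith.of_dist_le_mul fun a (ha : a ≤ 0) b (hb : b ≤ 0) => ?_
    rw [hφ₀ (show a - c ≤ 0 by linarith), hφ₀ (show b - c ≤ 0 by linarith)]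
    simpa [dist_comm] using hφ.dist_le_mul (-a - c) (-b - c)
  · refine LipschitzOnWith.of_dist_le_mul fun a (ha : 0 ≤ a) b (hb : 0 ≤ b) => ?_
    rw [hφ₀ (show -a - c ≤ 0 by linarith), hφ₀ (show -b - c ≤ 0 by linarith)]
    simpa using hφ.dist_le_mul (a - c) (b - c)

end Radial

section Majorant
variable {α : ℝ}

noncomputable def dalphaMajorant (α A M t : ℝ) : ℝ := (if t ≤ 1 then A * t ^ 2 else M) / t ^ (1 + α)

theorem dalphaMajorant_eqOn_Ioc (A M : ℝ) :
    EqOn (dalphaMajorant α A M) (fun t => A * t ^ (1 - α)) (Ioc 0 1) := by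
  intro t ht
  simp only [dalphaMajorant, if_pos ht.2]
  rw [← Real.rpow_natCast t 2, mul_div_assoc, ← Real.rpow_sub ht.1,
    show ((2 : ℕ) : ℝ) - (1 + α) = 1 - α by norm_num; ring]

theorem dalphaMajorant_eqOn_Ioi (A M : ℝ) :
    EqOn (dalphaMajorant α A M) (fun t => M * t ^ (-(1 + α))) (Ioi 1) := by
  intro t (ht : 1 < t)
  simp only [dalphaMajorant, if_neg (not_le.mpr ht)]
  rw [Real.rpow_neg (by linarith), div_eq_mul_inv]

theorem integrableOn_dalphaMajorant_Ioc (hα₂ : α < 2) (A M : ℝ) : IntegrableOn (dalphaMajorant α A M) (Ioc 0 1) := by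
  have h : IntegrableOn (fun t : ℝ => t ^ (1 - α)) (Ioc 0 1) :=
    (intervalIntegrable_iff_integrableOn_Ioc_of_le zero_le_one).mp
      (intervalIntegral.intervalIntegrable_rpow' (by linarith))
  exact IntegrableOn.congr_fun (h.const_mul A) (dalphaMajorant_eqOn_Ioc A M).symm measurableSet_Ioc

theorem integrableOn_dalphaMajorant_Ioi (hα₀ : 0 < α) (A M : ℝ) : IntegrableOn (dalphaMajorant α A M) (Ioi 1) := by
  have h : IntegrableOn (fun t : ℝ => t ^ (-(1 + α))) (Ioi 1) :=
    integrableOn_Ioi_rpow_of_lt (by linarith) zero_lt_one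
  exact IntegrableOn.congr_fun (h.const_mul M) (dalphaMajorant_eqOn_Ioi A M).symm measurableSet_Ioi

theorem integrableOn_dalphaMajorant (hα₀ : 0 < α) (hα₂ : α < 2) (A M : ℝ) :
    IntegrableOn (dalphaMajorant α A M) (Ioi 0) := by
  have := (integrableOn_dalphaMajorant_Ioc hα₂ A M).union
    (integrableOn_dalphaMajorant_Ioi hα₀ A M)
  rwa [Ioc_union_Ioi_eq_Ioi zero_le_one] at this

theorem setIntegral_dalphaMajorant (hα₀ : 0 < α) (hα₂ : α < 2) (A M : ℝ) :
    ∫ t in Ioi 0, dalphaMajorant α A M t = A / (2 - α) + M / α := by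
  rw [← Ioc_union_Ioi_eq_Ioi zero_le_one, setIntegral_union Ioc_disjoint_Ioi_same
    measurableSet_Ioi (integrableOn_dalphaMajorant_Ioc hα₂ A M)
    (integrableOn_dalphaMajorant_Ioi hα₀ A M),
    setIntegral_congr_fun measurableSet_Ioc (dalphaMajorant_eqOn_Ioc A M),
    setIntegral_congr_fun measurableSet_Ioi (dalphaMajorant_eqOn_Ioi A M),
    ← intervalIntegral.integral_of_le zero_le_one, intervalIntegral.integral_const_mul,
    integral_rpow (Or.inl (by linarith)), MeasureTheory.integral_const_mul,
    integral_Ioi_rpow_of_lt (by linarith) zero_lt_one]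
  have h2α : 2 - α ≠ 0 := by linarith
  have hα : α ≠ 0 := hα₀.ne'
  rw [show 1 - α + 1 = 2 - α by ring, show -(1 + α) + 1 = -α by ring, Real.one_rpow,
    Real.one_rpow, Real.zero_rpow h2α]
  field_simp
  ring

end Majorant

theorem IntegrableOn.integrable_comp_abs {f : ℝ → ℝ} (hf : IntegrableOn f (Ioi 0)) :
    Integrable (fun x => f |x|) := by
  have hpos : IntegrableOn (fun x => f |x|) (Ioi 0) :=
    hf.congr_fun (fun x hx => by rw [abs_of_pos hx]) measurableSet_Ioi
  have hneg : IntegrableOn (fun x => f |x|) (Iic 0) := by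
    have hneg : MeasurableEmbedding fun x : ℝ => -x := (Homeomorph.neg ℝ).measurableEmbedding
    rw [← Measure.map_neg_eq_self (volume : Measure ℝ), hneg.integrableOn_map_iff]
    simp_rw [Function.comp_def, abs_neg, neg_preimage, neg_Iic, neg_zero]
    exact (integrableOn_Ici_iff_integrableOn_Ioi).mpr hpos
  simpa using hneg.union hpos

section FractionalLaplacian
variable {α : ℝ} {f f' : ℝ → ℝ} {K : ℝ≥0} {M : ℝ}

theorem abs_dalpha_integrand_le (hf : ∀ x, HasDerivAt f (f' x) x) (hf' : LipschitzWith K f')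
    (hM : ∀ x y, |f x - f y| ≤ M) (x h : ℝ) :
    |(f (x + h) - f x - (if |h| ≤ 1 then deriv f x * h else 0)) / |h| ^ (1 + α)| ≤
      dalphaMajorant α (K / 2) M |h| := by
  have hd : 0 ≤ |h| ^ (1 + α) := Real.rpow_nonneg (abs_nonneg h) _
  rw [abs_div, abs_of_nonneg hd, dalphaMajorant]
  refine div_le_div_of_nonneg_right ?_ hd
  split_ifs
  · rw [(hf x).deriv, sq_abs]
    exact abs_sub_sub_mul_le_of_lipschitzWith hf hf' x h
  · rw [sub_zero]
    exact hM _ _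

theorem abs_Dalpha_le (hα₀ : 0 < α) (hα₂ : α < 2) (hf : ∀ x, HasDerivAt f (f' x) x)
    (hf' : LipschitzWith K f') (hM : ∀ x y, |f x - f y| ≤ M) (x : ℝ) :
    |Dalpha α f x| ≤ K / (2 - α) + 2 * M / α :=
  calc |Dalpha α f x|
      ≤ ∫ h, |(f (x + h) - f x - (if |h| ≤ 1 then deriv f x * h else 0)) / |h| ^ (1 + α)| :=
        abs_integral_le_integral_abs
    _ ≤ ∫ h, dalphaMajorant α (K / 2) M |h| :=
        integral_mono_of_nonneg (ae_of_all _ fun _ => abs_nonneg _)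
          (IntegrableOn.integrable_comp_abs (integrableOn_dalphaMajorant hα₀ hα₂ _ _))
          (ae_of_all _ (abs_dalpha_integrand_le hf hf' hM x))
    _ = 2 * (K / 2 / (2 - α) + M / α) := by
        rw [integral_comp_abs, setIntegral_dalphaMajorant hα₀ hα₂]
    _ = K / (2 - α) + 2 * M / α := by ring

end FractionalLaplacian

section Psi

theorem hasDerivAt_psi (u : ℝ) : HasDerivAt psi (30 * u ^ 2 * (1 - u) ^ 2) u :=
  ((((hasDerivAt_pow 5 u).const_mul 6).sub ((hasDerivAt_pow 4 u).const_mul 15)).add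
    ((hasDerivAt_pow 3 u).const_mul 10)).congr_deriv (by norm_num; ring)

theorem contDiff_psi : ContDiff ℝ 2 psi := by
  unfold psi
  fun_prop

theorem psi_zero : psi 0 = 0 := by norm_num [psi]

theorem deriv_psi_zero : deriv psi 0 = 0 := by simp [(hasDerivAt_psi 0).deriv]

theorem deriv_psi_one : deriv psi 1 = 0 := by simp [(hasDerivAt_psi 1).deriv]

theorem psi_mem_Icc {u : ℝ} (hu : u ∈ Icc (0 : ℝ) 1) : psi u ∈ Icc (0 : ℝ) 1 := by
  have hlow : psi u = u ^ 3 * (6 * (u - 5 / 4) ^ 2 + 5 / 8) := by unfold psi; ring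
  have hupp : 1 - psi u = (1 - u) ^ 3 * (6 * (u + 1 / 4) ^ 2 + 5 / 8) := by unfold psi; ring
  constructor
  · rw [hlow]
    exact mul_nonneg (pow_nonneg hu.1 3) (by positivity)
  · rw [← sub_nonneg, hupp]
    exact mul_nonneg (pow_nonneg (sub_nonneg.2 hu.2) 3) (by positivity)

theorem lipschitzOnWith_deriv_psi :
    LipschitzOnWith (⨆ u : Icc (0 : ℝ) 1, ‖deriv (deriv psi) u‖₊) (deriv psi) (Icc 0 1) := by
  have hdiff : Differentiable ℝ (deriv psi) := contDiff_psi.differentiable_deriv_two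
  have hcont : Continuous (deriv (deriv psi)) :=
    (contDiff_psi.deriv' (n := 1)).continuous_deriv_one
  have hbdd : BddAbove (range fun u : Icc (0 : ℝ) 1 => ‖deriv (deriv psi) u‖₊) :=
    (isCompact_range (by fun_prop)).bddAbove
  exact (convex_Icc 0 1).lipschitzOnWith_of_nnnorm_hasDerivWithin_le
    (fun u _ => (hdiff u).hasDerivAt.hasDerivWithinAt) (fun u hu => le_ciSup hbdd ⟨u, hu⟩)

end Psi

section CutoffFunctions

theorem hasDerivAt_fn_succ (m : ℕ) (x : ℝ) :
    HasDerivAt (fn (m + 1))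
      (cutoffProfile (deriv psi) (x - m) - cutoffProfile (deriv psi) (-x - m)) x :=
  hasDerivAt_comp_abs_sub
    (cutoffProfile.hasDerivAt
      (fun u _ => (contDiff_psi.differentiable (by norm_num) u).hasDerivAt.hasDerivWithinAt)
      deriv_psi_zero deriv_psi_one)
    (fun _ ht => by simp [cutoffProfile.of_nonpos ht, psi_zero]) m.cast_nonneg x

theorem lipschitzWith_deriv_fn_succ (m : ℕ) :
    LipschitzWith (⨆ u : Icc (0 : ℝ) 1, ‖deriv (deriv psi) u‖₊)
      fun x => cutoffProfile (deriv psi) (x - m) - cutoffProfile (deriv psi) (-x - m) :=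
  lipschitzWith_sub_comp_neg lipschitzOnWith_deriv_psi.lipschitzWith_cutoffProfile
    (fun _ ht => by simp [cutoffProfile.of_nonpos ht, deriv_psi_zero]) m.cast_nonneg

theorem fn_succ_mem_Icc (m : ℕ) (x : ℝ) : fn (m + 1) x ∈ Icc (0 : ℝ) 1 :=
  psi_mem_Icc ⟨le_min (le_max_right _ _) zero_le_one, min_le_right _ _⟩

theorem abs_fn_succ_sub_le_one (m : ℕ) (x y : ℝ) : |fn (m + 1) x - fn (m + 1) y| ≤ 1 := by
  have hx := fn_succ_mem_Icc m x
  have hy := fn_succ_mem_Icc m y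
  rw [abs_sub_le_iff]
  constructor <;> linarith [hx.1, hx.2, hy.1, hy.2]

end CutoffFunctions

theorem stmt8 (α : ℝ) (hα1 : 0 < α) (hα2 : α < 2) :
    ∀ n : ℕ, 1 ≤ n → ∀ x : ℝ,
      |Dalpha α (fn n) x| ≤
        (⨆ u : Set.Icc (0 : ℝ) 1, |deriv (deriv psi) (u : ℝ)|) / (2 - α) + 2 / α := by
  intro n hn x
  obtain ⟨m, rfl⟩ := Nat.exists_eq_add_of_le' hn
  have hK : ((⨆ u : Icc (0 : ℝ) 1, ‖deriv (deriv psi) u‖₊ : ℝ≥0) : ℝ) =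
      ⨆ u : Set.Icc (0 : ℝ) 1, |deriv (deriv psi) (u : ℝ)| := by
    simp [NNReal.coe_iSup]
  simpa [hK] using abs_Dalpha_le hα1 hα2 (hasDerivAt_fn_succ m) (lipschitzWith_deriv_fn_succ m)
    (abs_fn_succ_sub_le_one m) x
end

section
/- Let α ∈ (0,2). For every integer n ≥ 1 and every x ∈ ℝ with |x| < n−1, one has |D^α f_n(x)| ≤ 2/(α (n−1−|x|)^α). -/
open MeasureTheory Real Filter

lemma fn_abs_le_one (m : ℕ) (y : ℝ) : |fn (m + 1) y| ≤ 1 := by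
  set u : ℝ := min (max (|y| - (m : ℝ)) 0) 1 with hu
  have hu0 : 0 ≤ u := le_min (le_max_right _ _) zero_le_one
  have hu1 : u ≤ 1 := min_le_right _ _
  have h1 : 0 ≤ psi u := by
    have h3 := mul_nonneg (pow_nonneg hu0 3) (sq_nonneg (4 * u - 5))
    have h4 := pow_nonneg hu0 3
    unfold psi; nlinarith
  have h2 : psi u ≤ 1 := by
    have h6 : (0:ℝ) ≤ 6 * u ^ 2 + 3 * u + 1 := by nlinarith
    have := mul_nonneg (pow_nonneg (by linarith : (0:ℝ) ≤ 1 - u) 3) h6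
    unfold psi; nlinarith
  show |psi u| ≤ 1
  rw [abs_le]; constructor <;> linarith

theorem stmt9 (α : ℝ) (hα1 : 0 < α) (hα2 : α < 2) :
    ∀ n : ℕ, 1 ≤ n → ∀ x : ℝ, |x| < (n : ℝ) - 1 →
      |Dalpha α (fn n) x| ≤ 2 / (α * ((n : ℝ) - 1 - |x|) ^ α) := by
  intro n hn x hx
  obtain ⟨m, rfl⟩ : ∃ m, n = m + 1 := ⟨n - 1, (Nat.succ_pred_eq_of_pos hn).symm⟩
  have hm : ((m + 1 : ℕ) : ℝ) - 1 = (m : ℝ) := by push_cast; ring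
  rw [hm] at hx ⊢
  set r : ℝ := (m : ℝ) - |x| with hrdef
  have hr : 0 < r := by simp only [hrdef]; linarith
  -- fn vanishes on [-m, m]
  have hzero : ∀ y : ℝ, |y| ≤ (m : ℝ) → fn (m + 1) y = 0 := by
    intro y hy
    show psi (min (max (|y| - (m : ℝ)) 0) 1) = 0
    rw [max_eq_right (by linarith : |y| - (m : ℝ) ≤ 0), min_eq_left zero_le_one]
    unfold psi; ring
  have hfx : fn (m + 1) x = 0 := hzero x hx.le
  -- derivative at x is 0
  have hderiv : deriv (fn (m + 1)) x = 0 := by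
    have hev : fn (m + 1) =ᶠ[nhds x] (fun _ => (0 : ℝ)) := by
      filter_upwards [Metric.ball_mem_nhds x hr] with y hy
      apply hzero
      have h1 : |y - x| < r := by simpa [Real.dist_eq] using hy
      calc |y| = |y - x + x| := by ring_nf
        _ ≤ |y - x| + |x| := abs_add_le _ _
        _ ≤ (m : ℝ) := by simp only [hrdef] at h1; linarith
    rw [hev.deriv_eq]
    simp
  -- the integrand
  set g : ℝ → ℝ := fun h => fn (m + 1) (x + h) / |h| ^ (1 + α) with hg
  have hD : Dalpha α (fn (m + 1)) x = ∫ h : ℝ, g h := by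
    unfold Dalpha
    congr 1; funext h
    rw [hfx, hderiv]
    simp [hg]
  -- the majorant
  set S : Set ℝ := Set.Iic (-r) ∪ Set.Ici r with hS
  have hSmeas : MeasurableSet S := (measurableSet_Iic).union (measurableSet_Ici)
  set G0 : ℝ → ℝ := fun h => |h| ^ (-(1 + α)) with hG0
  have hexp : -(1 + α) < -1 := by linarith
  -- integrability on Ici r
  have hIci : IntegrableOn G0 (Set.Ici r) := by
    rw [integrableOn_Ici_iff_integrableOn_Ioi]
    refine (integrableOn_Ioi_rpow_of_lt hexp hr).congr_fun (fun y hy => ?_) measurableSet_Ioi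
    show y ^ (-(1 + α)) = |y| ^ (-(1 + α))
    rw [abs_of_pos (hr.trans hy)]
  -- integrability on Iic (-r)
  have hind_Ici : Integrable ((Set.Ici r).indicator G0) :=
    (integrable_indicator_iff measurableSet_Ici).2 hIci
  have hneg_eq : (Set.Iic (-r)).indicator G0 = fun h => ((Set.Ici r).indicator G0) (-h) := by
    funext h
    by_cases hh : h ≤ -r
    · rw [Set.indicator_of_mem (by exact hh : h ∈ Set.Iic (-r)),
        Set.indicator_of_mem (by simp only [Set.mem_Ici]; linarith : -h ∈ Set.Ici r)]
      show |h| ^ (-(1 + α)) = |(-h)| ^ (-(1 + α))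
      rw [abs_neg]
    · rw [Set.indicator_of_notMem (by exact hh : h ∉ Set.Iic (-r)),
        Set.indicator_of_notMem (by
          simp only [Set.mem_Ici, not_le]
          push_neg at hh
          linarith : -h ∉ Set.Ici r)]
  have hIic : IntegrableOn G0 (Set.Iic (-r)) := by
    have h2 := hind_Ici.comp_neg
    rw [← hneg_eq] at h2
    exact (integrable_indicator_iff measurableSet_Iic).1 h2
  have hdisj : Disjoint (Set.Iic (-r)) (Set.Ici r) := by
    rw [Set.disjoint_left]
    intro h h1 h2
    simp only [Set.mem_Iic] at h1
    simp only [Set.mem_Ici] at h2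
    linarith
  have hIntS : IntegrableOn G0 S := hIic.union hIci
  have hG : Integrable (S.indicator G0) := (integrable_indicator_iff hSmeas).2 hIntS
  -- pointwise bound
  have hle : ∀ h : ℝ, ‖g h‖ ≤ S.indicator G0 h := by
    intro h
    by_cases hh : |h| < r
    · have h0 : fn (m + 1) (x + h) = 0 := by
        apply hzero
        calc |x + h| ≤ |x| + |h| := abs_add_le _ _
          _ ≤ (m : ℝ) := by simp only [hrdef] at hh; linarith
      have hnotS : h ∉ S := by
        simp only [hS, Set.mem_union, Set.mem_Iic, Set.mem_Ici]
        push_neg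
        constructor
        · nlinarith [neg_abs_le h, abs_nonneg h]
        · nlinarith [le_abs_self h]
      rw [Set.indicator_of_notMem hnotS]
      simp [hg, h0]
    · push_neg at hh
      have hhpos : 0 < |h| := lt_of_lt_of_le hr hh
      have hmemS : h ∈ S := by
        simp only [hS, Set.mem_union, Set.mem_Iic, Set.mem_Ici]
        rcases abs_cases h with ⟨he, _⟩ | ⟨he, _⟩
        · right; linarith
        · left; linarith
      rw [Set.indicator_of_mem hmemS]
      have hpow : (0:ℝ) < |h| ^ (1 + α) := rpow_pos_of_pos hhpos _
      show ‖g h‖ ≤ |h| ^ (-(1 + α))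
      rw [Real.rpow_neg (abs_nonneg h)]
      have : ‖g h‖ = |fn (m + 1) (x + h)| / |h| ^ (1 + α) := by
        rw [hg]
        simp only [norm_div, Real.norm_eq_abs]
        rw [abs_of_pos hpow]
      rw [this, div_le_iff₀ hpow, inv_mul_cancel₀ hpow.ne']
      exact fn_abs_le_one m (x + h)
  -- compute the integral of the majorant
  have hint_Ici : ∫ h in Set.Ici r, G0 h = r ^ (-α) / α := by
    have e1 : ∫ h in Set.Ioi r, G0 h = ∫ h in Set.Ioi r, h ^ (-(1 + α)) :=
      setIntegral_congr_fun measurableSet_Ioi (fun y hy => by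
        show |y| ^ (-(1 + α)) = y ^ (-(1 + α))
        rw [abs_of_pos (hr.trans hy)])
    rw [integral_Ici_eq_integral_Ioi, e1, integral_Ioi_rpow_of_lt hexp hr,
      show -(1 + α) + 1 = -α by ring, neg_div_neg_eq]
  have hint_Iic : ∫ h in Set.Iic (-r), G0 h = r ^ (-α) / α := by
    have h1 : ∫ h in Set.Iic (-r), G0 (-h) = ∫ h in Set.Ici r, G0 h := by
      have h0 := integral_comp_neg_Iic (c := -r) (f := G0)
      rw [neg_neg, ← integral_Ici_eq_integral_Ioi] at h0
      exact h0
    have h2 : ∀ h : ℝ, G0 (-h) = G0 h := by intro h; simp [hG0]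
    rw [← hint_Ici, ← h1]
    congr 1; funext h; rw [h2]
  have hintG : ∫ h : ℝ, S.indicator G0 h = 2 / (α * r ^ α) := by
    rw [integral_indicator hSmeas, hS, setIntegral_union hdisj measurableSet_Ici hIic hIci,
      hint_Ici, hint_Iic, Real.rpow_neg hr.le]
    field_simp
    ring
  -- conclude
  rw [hD, ← Real.norm_eq_abs, ← hintG]
  exact norm_integral_le_of_norm_le hG (Filter.Eventually.of_forall hle)
end

section
/- Let μ₁ and μ₂ be finite nonnegative Borel measures on ℝ, and let ‖μ₁ − μ₂‖ = sup{ |∫f dμ₁ − ∫f dμ₂| : f : ℝ → ℝ Borel measurable with ‖f‖_∞ ≤ 1 } denote the total variation distance. Then ‖μ₁ − μ₂‖ = sup{ |∫f dμ₁ − ∫f dμ₂| : f ∈ C²_b(ℝ), ‖f‖_∞ ≤ 1 }. -/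
/-!
Only `≤` needs an argument, since `C²_b` functions are measurable. Given a Borel `f` with
`|f| ≤ 1` and `ε > 0`, approximate `f` in `L¹(μ₁ + μ₂)` by a continuous compactly supported `g`,
clamp `g` to `[-1, 1]` (which only brings it closer to `f`), and convolve with a narrow bump
function. The result `h` is smooth with compact support, hence in `C²_b`, is still bounded by `1`,
and is uniformly close to the clamped `g`, so `‖f - h‖_{L¹(μ₁ + μ₂)} ≤ ε`. This `L¹` distance
bounds the change of `∫ · dμ₁ - ∫ · dμ₂` when `f` is replaced by `h`.
-/

open MeasureTheory Real Filter

/-- `f` is in `C²_b(ℝ)`: twice continuously differentiable with `f`, `f'`, `f''` bounded. -/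
def C2b (f : ℝ → ℝ) : Prop :=
  ContDiff ℝ 2 f ∧ (∃ C, ∀ x, |f x| ≤ C) ∧ (∃ C, ∀ x, |deriv f x| ≤ C) ∧
    (∃ C, ∀ x, |deriv (deriv f) x| ≤ C)

open scoped ContDiff Convolution

theorem abs_sub_max_min_le {a b c : ℝ} (ha : |a| ≤ c) : |a - max (-c) (min c b)| ≤ |a - b| := by
  have hca : max (min c a) (-c) = a := by
    rw [abs_le] at ha
    rw [min_eq_right ha.2, max_eq_left ha.1]
  calc |a - max (-c) (min c b)| = |max (min c a) (-c) - max (min c b) (-c)| := by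
        rw [hca, max_comm (min c b)]
    _ ≤ |min c a - min c b| := abs_max_sub_max_le_abs _ _ _
    _ ≤ |a - b| := by simpa using abs_min_sub_min_le_max c a c b

section FiniteDimensional

variable {E : Type*} [NormedAddCommGroup E] [NormedSpace ℝ E] [FiniteDimensional ℝ E]

theorem HasCompactSupport.exists_contDiff_hasCompactSupport_dist_le {F : Type*}
    [NormedAddCommGroup F] [NormedSpace ℝ F] [CompleteSpace F] {g : E → F}
    (hgs : HasCompactSupport g) (hg : Continuous g) {M δ : ℝ} (hgM : ∀ x, ‖g x‖ ≤ M)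
    (hδ : 0 < δ) :
    ∃ h : E → F, ContDiff ℝ ∞ h ∧ HasCompactSupport h ∧ (∀ x, ‖h x‖ ≤ M) ∧
      ∀ x, dist (h x) (g x) ≤ δ := by
  borelize E
  obtain ⟨r, hr, hgr⟩ :=
    Metric.uniformContinuous_iff.mp (hgs.uniformContinuous_of_continuous hg) δ hδ
  let φ : ContDiffBump (0 : E) := ⟨r / 2, r, half_pos hr, half_lt_self hr⟩
  have hφ := φ.hasCompactSupport_normed (μ := .addHaar)
  refine ⟨φ.normed .addHaar ⋆[ContinuousLinearMap.lsmul ℝ ℝ, .addHaar] g,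
    hφ.contDiff_convolution_left _ φ.contDiff_normed hg.locallyIntegrable,
    hφ.convolution _ hgs, fun x => ?_, fun x => ?_⟩
  · simpa using dist_convolution_le (z₀ := 0) ((norm_nonneg _).trans (hgM 0))
      φ.support_normed_eq.subset φ.nonneg_normed φ.integral_normed hg.aestronglyMeasurable
      (fun y _ => by simpa using hgM y)
  · exact φ.dist_normed_convolution_le hg.aestronglyMeasurable fun y hy => (hgr hy).le

theorem exists_contDiff_hasCompactSupport_integral_abs_sub_le [MeasurableSpace E] [BorelSpace E]
    (ν : Measure E) [IsFiniteMeasure ν]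
    {f : E → ℝ} (hf : Measurable f) {M : ℝ} (hfM : ∀ x, |f x| ≤ M) {ε : ℝ} (hε : 0 < ε) :
    ∃ h : E → ℝ, ContDiff ℝ ∞ h ∧ HasCompactSupport h ∧ (∀ x, |h x| ≤ M) ∧
      ∫ x, |f x - h x| ∂ν ≤ ε := by
  have hfi : Integrable f ν := .of_bound hf.aestronglyMeasurable M (ae_of_all _ hfM)
  obtain ⟨g, hgs, hfg, hg, hgi⟩ := hfi.exists_hasCompactSupport_integral_sub_le (half_pos hε)
  have hM : 0 ≤ M := (abs_nonneg _).trans (hfM 0)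
  set k : E → ℝ := fun x => max (-M) (min M (g x))
  have hk : Continuous k := by fun_prop
  have hks : HasCompactSupport k :=
    hgs.comp_left (g := fun y => max (-M) (min M y)) (by simp [hM])
  have hkM : ∀ x, |k x| ≤ M := fun x =>
    abs_le.mpr ⟨le_max_left _ _, max_le (by linarith) (min_le_left _ _)⟩
  set δ := ε / 2 / (ν.real Set.univ + 1)
  have hδ : 0 < δ := by positivity
  obtain ⟨h, hh, hhs, hhM, hhk⟩ :=
    hks.exists_contDiff_hasCompactSupport_dist_le hk hkM hδ
  refine ⟨h, hh, hhs, hhM, ?_⟩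
  have hpt : ∀ x, |f x - h x| ≤ ‖f x - g x‖ + δ := fun x =>
    calc |f x - h x| ≤ |f x - k x| + |k x - h x| := abs_sub_le _ _ _
      _ ≤ |f x - g x| + δ := add_le_add (abs_sub_max_min_le (hfM x))
        (by simpa [abs_sub_comm, Real.dist_eq] using hhk x)
  have hhi : Integrable h ν := .of_bound hh.continuous.aestronglyMeasurable M (ae_of_all _ hhM)
  have hfgi : Integrable (fun x => ‖f x - g x‖) ν := (hfi.sub hgi).norm
  have hδν : δ * ν.real Set.univ ≤ ε / 2 := by
    have : δ * (ν.real Set.univ + 1) = ε / 2 := div_mul_cancel₀ _ (by positivity)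
    nlinarith
  calc ∫ x, |f x - h x| ∂ν ≤ ∫ x, (‖f x - g x‖ + δ) ∂ν :=
        integral_mono (hfi.sub hhi).abs (hfgi.add (integrable_const δ)) hpt
    _ = ∫ x, ‖f x - g x‖ ∂ν + δ * ν.real Set.univ := by
        rw [integral_add hfgi (integrable_const δ), integral_const, smul_eq_mul, mul_comm]
    _ ≤ ε / 2 + ε / 2 := add_le_add hfg hδν
    _ = ε := add_halves ε

end FiniteDimensional

theorem c2b_of_hasCompactSupport {f : ℝ → ℝ} (hf : ContDiff ℝ 2 f) (hfs : HasCompactSupport f) :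
    C2b f := by
  have bdd : ∀ {k : ℝ → ℝ}, Continuous k → HasCompactSupport k → ∃ C, ∀ x, |k x| ≤ C :=
    fun hk hks => hk.bounded_above_of_compact_support hks
  refine ⟨hf, bdd hf.continuous hfs, bdd (hf.continuous_deriv one_le_two) hfs.deriv, ?_⟩
  have : deriv (deriv f) = iteratedDeriv 2 f := by rw [iteratedDeriv_succ, iteratedDeriv_one]
  exact bdd (this ▸ hf.continuous_iteratedDeriv 2 le_rfl) hfs.deriv.deriv

theorem abs_integral_sub_integral_sub_le {α : Type*} [MeasurableSpace α] {μ₁ μ₂ : Measure α}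
    {f h : α → ℝ} (hf : Integrable f (μ₁ + μ₂)) (hh : Integrable h (μ₁ + μ₂)) :
    |((∫ x, f x ∂μ₁) - ∫ x, f x ∂μ₂) - ((∫ x, h x ∂μ₁) - ∫ x, h x ∂μ₂)| ≤
      ∫ x, |f x - h x| ∂(μ₁ + μ₂) := by
  obtain ⟨hf₁, hf₂⟩ := integrable_add_measure.mp hf
  obtain ⟨hh₁, hh₂⟩ := integrable_add_measure.mp hh
  calc _ = |(∫ x, f x - h x ∂μ₁) - ∫ x, f x - h x ∂μ₂| := by
        rw [integral_sub hf₁ hh₁, integral_sub hf₂ hh₂]; ring_nf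
    _ ≤ |∫ x, f x - h x ∂μ₁| + |∫ x, f x - h x ∂μ₂| := abs_sub _ _
    _ ≤ (∫ x, |f x - h x| ∂μ₁) + ∫ x, |f x - h x| ∂μ₂ :=
        add_le_add (abs_integral_le_integral_abs) (abs_integral_le_integral_abs)
    _ = ∫ x, |f x - h x| ∂(μ₁ + μ₂) :=
        (integral_add_measure (hf₁.sub hh₁).abs (hf₂.sub hh₂).abs).symm

theorem stmt14 (μ₁ μ₂ : Measure ℝ) [IsFiniteMeasure μ₁] [IsFiniteMeasure μ₂] :
    sSup {d : ℝ | ∃ f : ℝ → ℝ, Measurable f ∧ (∀ x, |f x| ≤ 1) ∧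
        d = |(∫ x, f x ∂μ₁) - ∫ x, f x ∂μ₂|} =
      sSup {d : ℝ | ∃ f : ℝ → ℝ, C2b f ∧ (∀ x, |f x| ≤ 1) ∧
        d = |(∫ x, f x ∂μ₁) - ∫ x, f x ∂μ₂|} := by
  set S₁ := {d : ℝ | ∃ f : ℝ → ℝ, Measurable f ∧ (∀ x, |f x| ≤ 1) ∧
    d = |(∫ x, f x ∂μ₁) - ∫ x, f x ∂μ₂|}
  set S₂ := {d : ℝ | ∃ f : ℝ → ℝ, C2b f ∧ (∀ x, |f x| ≤ 1) ∧
    d = |(∫ x, f x ∂μ₁) - ∫ x, f x ∂μ₂|}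
  have hS₁ : BddAbove S₁ := by
    refine ⟨1 * μ₁.real Set.univ + 1 * μ₂.real Set.univ, ?_⟩
    rintro _ ⟨f, -, hf, rfl⟩
    exact (abs_sub _ _).trans (add_le_add
      (by simpa using norm_integral_le_of_norm_le_const (μ := μ₁) (f := f) (ae_of_all _ hf))
      (by simpa using norm_integral_le_of_norm_le_const (μ := μ₂) (f := f) (ae_of_all _ hf)))
  have hS₂₁ : S₂ ⊆ S₁ := by
    rintro _ ⟨f, hf, hf1, rfl⟩
    exact ⟨f, hf.1.continuous.measurable, hf1, rfl⟩
  have hS₂ : (0 : ℝ) ∈ S₂ :=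
    ⟨0, c2b_of_hasCompactSupport contDiff_const .zero, by simp, by simp⟩
  refine le_antisymm (csSup_le ⟨0, hS₂₁ hS₂⟩ ?_) (csSup_le_csSup hS₁ ⟨0, hS₂⟩ hS₂₁)
  rintro _ ⟨f, hf, hf1, rfl⟩
  refine le_of_forall_pos_le_add fun ε hε => ?_
  obtain ⟨h, hh, hhs, hh1, hfh⟩ :=
    exists_contDiff_hasCompactSupport_integral_abs_sub_le (μ₁ + μ₂) hf hf1 hε
  have hΔ := abs_integral_sub_integral_sub_le (μ₁ := μ₁) (μ₂ := μ₂)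
    (.of_bound hf.aestronglyMeasurable 1 (ae_of_all _ hf1))
    (.of_bound hh.continuous.aestronglyMeasurable 1 (ae_of_all _ hh1))
  have hhS : |(∫ x, h x ∂μ₁) - ∫ x, h x ∂μ₂| ≤ sSup S₂ := le_csSup (hS₁.mono hS₂₁)
    ⟨h, c2b_of_hasCompactSupport (hh.of_le ENat.LEInfty.out) hhs, hh1, rfl⟩
  linarith [abs_sub_abs_le_abs_sub ((∫ x, f x ∂μ₁) - ∫ x, f x ∂μ₂)
    ((∫ x, h x ∂μ₁) - ∫ x, h x ∂μ₂)]
end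

section
/- Let α ∈ (0,2). The pushforward of the measure dh/|h|^{1+α} restricted to {h ∈ ℝ : 0 < |h| ≤ 1} under the map h ↦ sgn(h)/(α |h|^α) equals the Lebesgue measure restricted to {z ∈ ℝ : |z| ≥ 1/α}. -/
open MeasureTheory Real Filter

/-!
Off the origin the map `φ h = sgn h / (α |h|^α)` is injective (its sign and its modulus
`(α |h|^α)⁻¹` recover `h`), and since `sgn` is locally constant there,
`φ' h = -|h|^(-(1+α))`.
It maps `{0 < |h| ≤ 1}` onto `{|z| ≥ 1/α}`, so the one-dimensional change of variables formula,
read as `map φ (vol|_s with density |φ'|) = vol|_{φ s}`, is exactly the claim.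
-/

theorem map_withDensity_abs_deriv_eq_volume {s : Set ℝ} {f f' : ℝ → ℝ}
    (hs : MeasurableSet s) (hf' : ∀ x ∈ s, HasDerivWithinAt f (f' x) s x) (hf : Set.InjOn f s) :
    Measure.map f ((volume.restrict s).withDensity fun x => ENNReal.ofReal |f' x|) =
      volume.restrict (f '' s) := by
  simpa only [ContinuousLinearMap.det_toSpanSingleton] using
    map_withDensity_abs_det_fderiv_eq_addHaar volume hs.nullMeasurableSet
      (fun x hx => (hf' x hx).hasFDerivWithinAt) hf

theorem Real.sign_eventuallyEq {x : ℝ} (hx : x ≠ 0) :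
    Real.sign =ᶠ[nhds x] fun _ => Real.sign x := by
  rcases hx.lt_or_gt with hx | hx
  · filter_upwards [Iio_mem_nhds hx] with y hy
    rw [Real.sign_of_neg hy, Real.sign_of_neg hx]
  · filter_upwards [Ioi_mem_nhds hx] with y hy
    rw [Real.sign_of_pos hy, Real.sign_of_pos hx]

theorem Real.abs_sign_of_ne_zero {x : ℝ} (hx : x ≠ 0) : |Real.sign x| = 1 := by
  rcases Real.sign_apply_eq_of_ne_zero x hx with h | h <;> simp [h]

theorem Real.sign_mul_sign_of_ne_zero {x : ℝ} (hx : x ≠ 0) :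
    Real.sign x * (SignType.sign x : ℝ) = 1 := by
  rcases hx.lt_or_gt with hx | hx <;> simp [Real.sign_of_neg, Real.sign_of_pos, hx]

section

variable {α : ℝ}

theorem hasDerivAt_sign_div_mul_abs_rpow (hα : α ≠ 0) {x : ℝ} (hx : x ≠ 0) :
    HasDerivAt (fun h => Real.sign h / (α * |h| ^ α)) (-|x| ^ (-(1 + α))) x := by
  have hr : 0 < |x| := abs_pos.mpr hx
  have hpow : HasDerivAt (fun y => |y| ^ α) (SignType.sign x * α * |x| ^ (α - 1)) x :=
    (hasDerivAt_abs hx).rpow_const (Or.inl hr.ne')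
  have hden := ((hpow.const_mul α).inv (by positivity)).const_mul (Real.sign x)
  refine (hden.congr_of_eventuallyEq ?_).congr_deriv ?_
  · filter_upwards [Real.sign_eventuallyEq hx] with y hy
    simp only [hy, div_eq_mul_inv, Pi.inv_apply]
  · have hexp : |x| ^ (α - 1) = |x| ^ (-(1 + α)) * |x| ^ α * |x| ^ α := by
      rw [← rpow_add hr, ← rpow_add hr]; ring_nf
    rw [hexp]
    field_simp
    rw [Real.sign_mul_sign_of_ne_zero hx]

theorem sign_div_mul_abs_rpow_neg (h : ℝ) :
    Real.sign (-h) / (α * |-h| ^ α) = -(Real.sign h / (α * |h| ^ α)) := by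
  rw [Real.sign_neg, abs_neg, neg_div]

theorem abs_sign_div_mul_abs_rpow (hα : 0 < α) {h : ℝ} (hh : h ≠ 0) :
    |Real.sign h / (α * |h| ^ α)| = (α * |h| ^ α)⁻¹ := by
  have : 0 < α * |h| ^ α := by positivity
  rw [abs_div, Real.abs_sign_of_ne_zero hh, abs_of_pos this, one_div]

theorem injOn_sign_div_mul_abs_rpow (hα : 0 < α) :
    Set.InjOn (fun h => Real.sign h / (α * |h| ^ α)) {h | h ≠ 0} := by
  intro a ha b hb hab
  have habs : |a| = |b| := by
    have h := congrArg abs hab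
    rw [abs_sign_div_mul_abs_rpow hα ha, abs_sign_div_mul_abs_rpow hα hb, inv_inj] at h
    exact rpow_left_injOn hα.ne' (abs_nonneg a) (abs_nonneg b) (mul_left_cancel₀ hα.ne' h)
  rcases abs_eq_abs.mp habs with rfl | rfl
  · rfl
  · simp only [sign_div_mul_abs_rpow_neg] at hab
    have habs_b := abs_sign_div_mul_abs_rpow hα hb
    rw [show Real.sign b / (α * |b| ^ α) = 0 by linarith, abs_zero] at habs_b
    have hpos : 0 < α * |b| ^ α := mul_pos hα (rpow_pos_of_pos (abs_pos.mpr hb) α)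
    exact absurd habs_b (inv_pos.mpr hpos).ne

theorem exists_pos_sign_div_mul_abs_rpow_eq (hα : 0 < α) {z : ℝ} (hz : 1 / α ≤ z) :
    ∃ h ∈ Set.Ioc (0 : ℝ) 1, Real.sign h / (α * |h| ^ α) = z := by
  have hαz : 1 ≤ α * z := by rwa [div_le_iff₀' hα] at hz
  have hz0 : 0 < z := (one_div_pos.mpr hα).trans_le hz
  refine ⟨(α * z) ^ (-α⁻¹),
    ⟨by positivity, rpow_le_one_of_one_le_of_nonpos hαz (by simp [hα.le])⟩, ?_⟩
  have hpow : ((α * z) ^ (-α⁻¹)) ^ α = (α * z)⁻¹ := by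
    rw [← rpow_mul (by positivity), neg_mul, inv_mul_cancel₀ hα.ne', rpow_neg_one]
  rw [Real.sign_of_pos (by positivity), abs_of_pos (by positivity), hpow]
  field_simp

theorem image_sign_div_mul_abs_rpow (hα : 0 < α) :
    (fun h => Real.sign h / (α * |h| ^ α)) '' {h | 0 < |h| ∧ |h| ≤ 1} =
      {z | 1 / α ≤ |z|} := by
  ext z
  constructor
  · rintro ⟨h, ⟨h0, h1⟩, rfl⟩
    have hpow : α * |h| ^ α ≤ α :=
      mul_le_of_le_one_right hα.le (rpow_le_one (abs_nonneg h) h1 hα.le)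
    show 1 / α ≤ _
    rw [abs_sign_div_mul_abs_rpow hα (abs_pos.mp h0), one_div]
    exact inv_anti₀ (by positivity) hpow
  · intro hz
    rcases le_or_gt 0 z with hz0 | hz0
    · obtain ⟨h, ⟨h0, h1⟩, rfl⟩ :=
        exists_pos_sign_div_mul_abs_rpow_eq hα (hz.trans_eq (abs_of_nonneg hz0))
      refine ⟨h, ?_, rfl⟩
      rw [Set.mem_ofPred, abs_of_pos h0]
      exact ⟨h0, h1⟩
    · obtain ⟨h, ⟨h0, h1⟩, he⟩ :=
        exists_pos_sign_div_mul_abs_rpow_eq hα (hz.trans_eq (abs_of_neg hz0))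
      refine ⟨-h, ?_, by simp only [sign_div_mul_abs_rpow_neg, he, neg_neg]⟩
      rw [Set.mem_ofPred, abs_neg, abs_of_pos h0]
      exact ⟨h0, h1⟩

end

theorem stmt18_general (α : ℝ) (hα1 : 0 < α) :
    Measure.map (fun h : ℝ => Real.sign h / (α * |h| ^ α))
      ((((volume : Measure ℝ).restrict {h : ℝ | 0 < |h| ∧ |h| ≤ 1}).withDensity
        fun h => ENNReal.ofReal (|h| ^ (-(1 + α))))) =
      (volume : Measure ℝ).restrict {z : ℝ | 1 / α ≤ |z|} := by
  have hT : MeasurableSet {h : ℝ | 0 < |h| ∧ |h| ≤ 1} := by measurability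
  have hdensity : (fun h : ℝ => ENNReal.ofReal (|h| ^ (-(1 + α)))) =
      fun h => ENNReal.ofReal |-(|h| ^ (-(1 + α)))| := by
    funext h
    rw [abs_neg, abs_of_nonneg (rpow_nonneg (abs_nonneg h) _)]
  rw [hdensity, ← image_sign_div_mul_abs_rpow hα1]
  exact map_withDensity_abs_deriv_eq_volume hT
    (fun x hx => (hasDerivAt_sign_div_mul_abs_rpow hα1.ne' (abs_pos.mp hx.1)).hasDerivWithinAt)
    ((injOn_sign_div_mul_abs_rpow hα1).mono fun x hx => abs_pos.mp hx.1)

theorem stmt18 (α : ℝ) (hα1 : 0 < α) (hα2 : α < 2) :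
    Measure.map (fun h : ℝ => Real.sign h / (α * |h| ^ α))
      ((((volume : Measure ℝ).restrict {h : ℝ | 0 < |h| ∧ |h| ≤ 1}).withDensity
        fun h => ENNReal.ofReal (|h| ^ (-(1 + α))))) =
      (volume : Measure ℝ).restrict {z : ℝ | 1 / α ≤ |z|} :=
  stmt18_general α hα1
end
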